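/- Let G be the trivalent Le-graph of the totally positive Schubert cell of shape λ and let M be a marking of G. Let Γ2 be a marked white vertex of row i, let Γ1 be the white vertex of row i closest to Γ2 (either immediately on its left or immediately on its right), and let Γ3 be a white vertex of row i+1 lying between Γ1 and Γ2 in the left-right order. Then Γ1 is marked if and only if Γ3 is marked. -/
import Mathlib


/-!
A concrete combinatorial model of the trivalent Le-graph `G` of the totally positive
Schubert cell of shape `μ` (a nonempty Young diagram, rows and columns indexed from `0`).

In the fully filled Le-tableau every box `(i,j)` of `μ` carries an internal vertex of the
Le-network; after removing the (unique) bivalent vertex at the box `(0,0)` and splitting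
every four-valent vertex into an adjacent white/black pair of trivalent vertices, the box
`(i,j)` contributes a white vertex `white i j` when `j ≥ 1` and a black vertex `black i j`
when `i ≥ 1`.  Each remaining trivalent vertex is white iff it has exactly one incoming
edge, and black iff it has exactly one outgoing edge (horizontal edges are oriented
right-to-left, vertical edges downward).  `bsource i` is the boundary vertex attached to
the right end of row `i` and `bsink j` the boundary vertex attached to the bottom of
column `j`.
-/

namespace LeGraph

/-- Vertices of the trivalent Le-graph (internal and boundary). -/
inductive V : Type
  | white (i j : ℕ)
  | black (i j : ℕ)
  | bsource (i : ℕ)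
  | bsink (j : ℕ)
deriving DecidableEq

/-- Internal vertices. -/
def V.isInternal : V → Prop
  | white _ _ => True
  | black _ _ => True
  | _ => False

/-- Boundary vertices. -/
def V.isBoundary : V → Prop
  | bsource _ => True
  | bsink _ => True
  | _ => False

/-- White vertices. -/
def V.isWhite : V → Prop
  | white _ _ => True
  | _ => False

/-- Black vertices. -/
def V.isBlack : V → Prop
  | black _ _ => True
  | _ => False

/-- The row of the Young diagram an internal vertex lies in (junk value for sinks). -/
def V.row : V → ℕ
  | white i _ => i
  | black i _ => i
  | bsource i => i
  | bsink _ => 0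

variable (μ : YoungDiagram)

/-- The vertices actually occurring in the Le-graph of shape `μ`. -/
def Valid : V → Prop
  | .white i j => (i, j) ∈ μ ∧ 1 ≤ j
  | .black i j => (i, j) ∈ μ ∧ 1 ≤ i
  | .bsource i => (i, 0) ∈ μ
  | .bsink j => (0, j) ∈ μ

/-- The (oriented, listed once) edges of the Le-graph of shape `μ`:
* `link`: the new edge joining the white/black pair obtained by splitting the four-valent
  vertex of the box `(i,j)`, `i,j ≥ 1`;
* `horiz`: the horizontal edge joining the boxes `(i,j)` and `(i,j+1)` of row `i ≥ 1`;
* `horizTop`: the horizontal edge joining the boxes `(0,j)` and `(0,j+1)` of the top row;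
* `mergedEdge`: the edge through the removed bivalent vertex of the box `(0,0)`;
* `vert`/`vertLeft`: the vertical edge joining the boxes `(i,j)` and `(i+1,j)`;
* `sourceEdge`/`sourceTop`/`sourceMerged`: the edge joining the rightmost box of a row to
  its boundary source vertex;
* `sinkEdge`/`sinkLeft`/`sinkMerged`: the edge joining the lowest box of a column to its
  boundary sink vertex;
* `singleBox`: the degenerate case where `μ` consists of the single box `(0,0)`. -/
inductive AdjAux : V → V → Prop
  | link {i j : ℕ} (h : (i, j) ∈ μ) (hi : 1 ≤ i) (hj : 1 ≤ j) :
      AdjAux (.white i j) (.black i j)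
  | horiz {i j : ℕ} (h : (i, j + 1) ∈ μ) (hi : 1 ≤ i) :
      AdjAux (.black i j) (.white i (j + 1))
  | horizTop {j : ℕ} (h : (0, j + 1) ∈ μ) (hj : 1 ≤ j) :
      AdjAux (.white 0 j) (.white 0 (j + 1))
  | mergedEdge (h0 : (0, 1) ∈ μ) (h1 : (1, 0) ∈ μ) :
      AdjAux (.white 0 1) (.black 1 0)
  | vert {i j : ℕ} (h : (i + 1, j) ∈ μ) (hj : 1 ≤ j) :
      AdjAux (.white i j) (.black (i + 1) j)
  | vertLeft {i : ℕ} (h : (i + 1, 0) ∈ μ) (hi : 1 ≤ i) :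
      AdjAux (.black i 0) (.black (i + 1) 0)
  | sourceEdge {i j : ℕ} (h : (i, j) ∈ μ) (h' : (i, j + 1) ∉ μ) (hi : 1 ≤ i) :
      AdjAux (.black i j) (.bsource i)
  | sourceTop {j : ℕ} (h : (0, j) ∈ μ) (h' : (0, j + 1) ∉ μ) (hj : 1 ≤ j) :
      AdjAux (.white 0 j) (.bsource 0)
  | sourceMerged (h : (0, 1) ∉ μ) (h1 : (1, 0) ∈ μ) :
      AdjAux (.black 1 0) (.bsource 0)
  | sinkEdge {i j : ℕ} (h : (i, j) ∈ μ) (h' : (i + 1, j) ∉ μ) (hj : 1 ≤ j) :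
      AdjAux (.white i j) (.bsink j)
  | sinkLeft {i : ℕ} (h : (i, 0) ∈ μ) (h' : (i + 1, 0) ∉ μ) (hi : 1 ≤ i) :
      AdjAux (.black i 0) (.bsink 0)
  | sinkMerged (h : (1, 0) ∉ μ) (h0 : (0, 1) ∈ μ) :
      AdjAux (.white 0 1) (.bsink 0)
  | singleBox (h : (0, 0) ∈ μ) (h1 : (0, 1) ∉ μ) (h2 : (1, 0) ∉ μ) :
      AdjAux (.bsource 0) (.bsink 0)

/-- Two vertices are directly connected iff they are joined by an edge of `G`. -/
def Adj (u v : V) : Prop := AdjAux μ u v ∨ AdjAux μ v u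

/-- An internal vertex is directly connected to the boundary iff it is joined by an edge
of `G` to a boundary vertex. -/
def ConnectedToBoundary (v : V) : Prop := ∃ b : V, b.isBoundary ∧ Adj μ v b

/-- A marking of the Le-graph of shape `μ`: a set `M` of (valid) internal vertices such
that (i) every black vertex directly connected to a white vertex of `M` belongs to `M`;
(ii) every white vertex directly connected to at least two vertices of `M` belongs to `M`;
(iii) no white vertex of the top row, and no white vertex that is leftmost among the white
vertices of its row (i.e. in column `1`), belongs to `M`. -/
structure IsMarking (M : Set V) : Prop where
  internal : ∀ v ∈ M, v.isInternal ∧ Valid μ v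
  black_mem : ∀ w ∈ M, w.isWhite → ∀ b : V, b.isBlack → Valid μ b → Adj μ b w → b ∈ M
  white_mem : ∀ w : V, w.isWhite → Valid μ w →
      (∃ u ∈ M, ∃ v ∈ M, u ≠ v ∧ Adj μ w u ∧ Adj μ w v) → w ∈ M
  top_row : ∀ j : ℕ, V.white 0 j ∉ M
  leftmost : ∀ i : ℕ, V.white i 1 ∉ M

/-- Adjacency within a set `M` of vertices (for the subgraph of `G` induced by `M`). -/
def AdjIn (M : Set V) (u v : V) : Prop := u ∈ M ∧ v ∈ M ∧ Adj μ u v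

/-- `C` is a connected component of the subgraph of `G` induced by `M`:
`C ⊆ M`, any two vertices of `C` are joined by a path inside `M`, and `C` is closed under
adjacency inside `M`. -/
def IsConnComp (M C : Set V) : Prop :=
  C ⊆ M ∧ (∀ u ∈ C, ∀ v ∈ C, Relation.ReflTransGen (AdjIn μ M) u v) ∧
    ∀ u ∈ C, ∀ v : V, AdjIn μ M u v → v ∈ C

/-- The faces of the Le-graph of shape `μ`:
* `box i j` (for `(i,j) ∈ μ`, `i,j ≥ 1`): the internal face whose bottom-right corner box
  is `(i,j)` (bounded by the wires of rows `i-1`, `i` and columns `j-1`, `j`);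
* `corner i`: the face between the source edge of row `i` and the next boundary edge;
* `col j` (for `j ≥ 1`): the face between the sink edge of column `j` and the next
  boundary edge;
* `outer`: the unbounded face (whose boundary contains the top row and leftmost column). -/
inductive Face : Type
  | box (i j : ℕ)
  | corner (i : ℕ)
  | col (j : ℕ)
  | outer
deriving DecidableEq

/-- The faces actually occurring in the Le-graph of shape `μ`. -/
def FaceValid : Face → Prop
  | .box i j => (i, j) ∈ μ ∧ 1 ≤ i ∧ 1 ≤ j
  | .corner i => (i, 0) ∈ μ
  | .col j => (0, j) ∈ μ ∧ 1 ≤ j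
  | .outer => True

open Classical in
/-- The set of internal vertices lying on the boundary of a face. -/
noncomputable def FaceBdry : Face → Set V
  | .box i j =>
      {v | Valid μ v ∧ (v = .white (i - 1) (j - 1) ∨ v = .black (i - 1) (j - 1) ∨
        v = .white (i - 1) j ∨ v = .black i (j - 1) ∨ v = .white i j ∨ v = .black i j)}
  | .corner i =>
      if (i + 1, μ.rowLen i - 1) ∈ μ then
        {v | Valid μ v ∧ (v = .black i (μ.rowLen i - 1) ∨ v = .white i (μ.rowLen i - 1) ∨
          v = .black (i + 1) (μ.rowLen i - 1))}
      else
        {v | Valid μ v ∧ (v = .white i (μ.rowLen i - 1) ∨ v = .black i (μ.rowLen i - 1))}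
  | .col j =>
      if (μ.colLen j, j - 1) ∈ μ then
        {v | Valid μ v ∧ (v = .white (μ.colLen j - 1) j ∨ v = .black (μ.colLen j - 1) (j - 1) ∨
          v = .white (μ.colLen j - 1) (j - 1) ∨ v = .black (μ.colLen j) (j - 1))}
      else
        {v | Valid μ v ∧ (v = .white (μ.colLen j - 1) j ∨ v = .black (μ.colLen j - 1) (j - 1) ∨
          v = .white (μ.colLen j - 1) (j - 1))}
  | .outer => {v | Valid μ v ∧ ((∃ j, v = .white 0 j) ∨ (∃ i, v = .black i 0))}

/-- A face is internal to a set `S` of internal vertices iff every internal vertex on its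
boundary belongs to `S`. -/
def FaceInternalTo (S : Set V) (f : Face) : Prop := ∀ v ∈ FaceBdry μ f, v ∈ S

/-- A face lies between rows `i` and `i+1` iff all internal vertices on its boundary
belong to rows `i` and `i+1`. -/
def FaceBetween (i : ℕ) (f : Face) : Prop := ∀ v ∈ FaceBdry μ f, v.row = i ∨ v.row = i + 1


/-- let `Γ2 = white i c` be a marked white vertex of row `i`, let
`Γ1 = white i c'` be the white vertex of row `i` closest to `Γ2` (immediately on its left,
`c' + 1 = c`, or immediately on its right, `c' = c + 1`), and let `Γ3 = white (i+1) (max c c')`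
be the white vertex of row `i+1` lying between `Γ1` and `Γ2` in the left-right order.
Then `Γ1` is marked iff `Γ3` is marked. -/
theorem neighbour_marked_iff (μ : YoungDiagram) (hμ : μ.cells.Nonempty)
    (M : Set V) (hM : IsMarking μ M) (i c c' : ℕ)
    (hside : c' + 1 = c ∨ c' = c + 1)
    (h2 : Valid μ (V.white i c)) (hm2 : V.white i c ∈ M)
    (h1 : Valid μ (V.white i c'))
    (h3 : Valid μ (V.white (i + 1) (max c c'))) :
    V.white i c' ∈ M ↔ V.white (i + 1) (max c c') ∈ M := by
  -- row i is not the top row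
  have hi : 1 ≤ i := by
    rcases Nat.eq_zero_or_pos i with h0 | h
    · exact absurd (h0 ▸ hm2) (hM.top_row c)
    · exact h
  have h2' : (i, c) ∈ μ ∧ 1 ≤ c := h2
  have h1' : (i, c') ∈ μ ∧ 1 ≤ c' := h1
  rcases hside with hl | hr
  · -- Γ1 immediately to the left: c = c' + 1
    subst hl
    have hmax : max (c' + 1) c' = c' + 1 := Nat.max_eq_left (Nat.le_succ c')
    rw [hmax] at h3 ⊢
    have h3' : (i + 1, c' + 1) ∈ μ ∧ 1 ≤ c' + 1 := h3
    have hleft : (i + 1, c') ∈ μ := μ.up_left_mem le_rfl (Nat.le_succ c') h3'.1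
    -- black i c' ∈ M
    have hb1 : V.black i c' ∈ M :=
      hM.black_mem _ hm2 trivial (V.black i c') trivial ⟨h1'.1, hi⟩
        (Or.inl (AdjAux.horiz h2'.1 hi))
    -- black (i+1) (c'+1) ∈ M
    have hb2 : V.black (i + 1) (c' + 1) ∈ M :=
      hM.black_mem _ hm2 trivial (V.black (i + 1) (c' + 1)) trivial
        ⟨h3'.1, Nat.le_add_left 1 i⟩ (Or.inr (AdjAux.vert h3'.1 (Nat.le_add_left 1 c')))
    constructor
    · intro hm1
      have hb3 : V.black (i + 1) c' ∈ M :=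
        hM.black_mem _ hm1 trivial (V.black (i + 1) c') trivial
          ⟨hleft, Nat.le_add_left 1 i⟩ (Or.inr (AdjAux.vert hleft h1'.2))
      exact hM.white_mem _ trivial ⟨h3'.1, h3'.2⟩
        ⟨V.black (i + 1) c', hb3, V.black (i + 1) (c' + 1), hb2, by simp,
          Or.inr (AdjAux.horiz h3'.1 (Nat.le_add_left 1 i)),
          Or.inl (AdjAux.link h3'.1 (Nat.le_add_left 1 i) (Nat.le_add_left 1 c'))⟩
    · intro hm3
      have hb3 : V.black (i + 1) c' ∈ M :=
        hM.black_mem _ hm3 trivial (V.black (i + 1) c') trivial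
          ⟨hleft, Nat.le_add_left 1 i⟩ (Or.inl (AdjAux.horiz h3'.1 (Nat.le_add_left 1 i)))
      exact hM.white_mem _ trivial ⟨h1'.1, h1'.2⟩
        ⟨V.black i c', hb1, V.black (i + 1) c', hb3, by simp,
          Or.inl (AdjAux.link h1'.1 hi h1'.2),
          Or.inl (AdjAux.vert hleft h1'.2)⟩
  · -- Γ1 immediately to the right: c' = c + 1
    subst hr
    have hmax : max c (c + 1) = c + 1 := Nat.max_eq_right (Nat.le_succ c)
    rw [hmax] at h3 ⊢
    have h3' : (i + 1, c + 1) ∈ μ ∧ 1 ≤ c + 1 := h3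
    have hleft : (i + 1, c) ∈ μ := μ.up_left_mem le_rfl (Nat.le_succ c) h3'.1
    -- black i c ∈ M
    have hb2 : V.black i c ∈ M :=
      hM.black_mem _ hm2 trivial (V.black i c) trivial ⟨h2'.1, hi⟩
        (Or.inr (AdjAux.link h2'.1 hi h2'.2))
    -- black (i+1) c ∈ M
    have hb4 : V.black (i + 1) c ∈ M :=
      hM.black_mem _ hm2 trivial (V.black (i + 1) c) trivial
        ⟨hleft, Nat.le_add_left 1 i⟩ (Or.inr (AdjAux.vert hleft h2'.2))
    constructor
    · intro hm1
      have hb5 : V.black (i + 1) (c + 1) ∈ M :=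
        hM.black_mem _ hm1 trivial (V.black (i + 1) (c + 1)) trivial
          ⟨h3'.1, Nat.le_add_left 1 i⟩
          (Or.inr (AdjAux.vert h3'.1 (Nat.le_add_left 1 c)))
      exact hM.white_mem _ trivial ⟨h3'.1, h3'.2⟩
        ⟨V.black (i + 1) c, hb4, V.black (i + 1) (c + 1), hb5, by simp,
          Or.inr (AdjAux.horiz h3'.1 (Nat.le_add_left 1 i)),
          Or.inl (AdjAux.link h3'.1 (Nat.le_add_left 1 i) (Nat.le_add_left 1 c))⟩
    · intro hm3
      have hb5 : V.black (i + 1) (c + 1) ∈ M :=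
        hM.black_mem _ hm3 trivial (V.black (i + 1) (c + 1)) trivial
          ⟨h3'.1, Nat.le_add_left 1 i⟩
          (Or.inr (AdjAux.link h3'.1 (Nat.le_add_left 1 i) (Nat.le_add_left 1 c)))
      exact hM.white_mem _ trivial ⟨h1'.1, h1'.2⟩
        ⟨V.black i c, hb2, V.black (i + 1) (c + 1), hb5, by simp,
          Or.inr (AdjAux.horiz h1'.1 hi),
          Or.inl (AdjAux.vert h3'.1 (Nat.le_add_left 1 c))⟩

end LeGraph
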